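/- arXiv:1311.6180 — 3 statements merged into one kernel-verified Lean document; each statement's English description precedes it below -/
import Mathlib

section
/- Let θ_p ≥ 0 for each prime p ≤ n, V uniform on {1,...,n}, Z_p the indicator that p ∣ V, and Y_p independent Bernoulli(1/p) random variables. Then E[exp(∑_{p ≤ n, p prime} θ_p Z_p)] ≤ E[exp(∑_{p ≤ n, p prime} θ_p Y_p)]. -/
/-!
For `z ∈ {0, 1}` one has `exp (θ z) = 1 + (exp θ - 1) z`, so the exponential of a weighted sum of
`0/1` variables expands as `∑_{S ⊆ P} (∏_{p ∈ S} (exp θ_p - 1)) ∏_{p ∈ S} z_p` with nonnegative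
coefficients. It therefore suffices to compare joint moments: for a set `S` of distinct primes,
`∏_{p ∈ S} Z_p` is the indicator of `∏ S ∣ V`, whose mean is `⌊n / ∏ S⌋ / n ≤ 1 / ∏ S`, while
independence gives `E[∏_{p ∈ S} Y_p] = ∏_{p ∈ S} 1 / p` exactly.
-/

open MeasureTheory ProbabilityTheory Finset Real

theorem exp_mul_eq_of_eq_zero_or_eq_one {a z : ℝ} (hz : z = 0 ∨ z = 1) :
    exp (a * z) = (exp a - 1) * z + 1 := by
  rcases hz with rfl | rfl <;> simp

theorem exp_sum_mul_eq_sum_powerset {ι : Type*} [DecidableEq ι] (s : Finset ι) (a z : ι → ℝ)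
    (hz : ∀ i ∈ s, z i = 0 ∨ z i = 1) :
    exp (∑ i ∈ s, a i * z i) = ∑ t ∈ s.powerset, (∏ i ∈ t, (exp (a i) - 1)) * ∏ i ∈ t, z i := by
  rw [exp_sum, prod_congr rfl fun i hi => exp_mul_eq_of_eq_zero_or_eq_one (hz i hi), prod_add]
  simp only [prod_const_one, mul_one, prod_mul_distrib]

theorem Nat.cast_div_div_self_le_inv (n m : ℕ) : ((n / m : ℕ) : ℝ) / n ≤ (m : ℝ)⁻¹ := by
  calc ((n / m : ℕ) : ℝ) / n ≤ ((n : ℝ) / m) / n := by gcongr; exact Nat.cast_div_le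
    _ ≤ (m : ℝ)⁻¹ := by
        rcases n.eq_zero_or_pos with rfl | hn
        · simp
        · rw [div_div_cancel_left' (by positivity)]

theorem prod_ite_dvd_eq_ite_prod_dvd {R : Type*} [CommSemiring R] {S : Finset ℕ}
    (hS : ∀ p ∈ S, p.Prime) (v : ℕ) :
    ∏ p ∈ S, (if p ∣ v then (1 : R) else 0) = if ∏ p ∈ S, p ∣ v then 1 else 0 := by
  rw [prod_boole]
  exact if_congr ⟨prod_primes_dvd v fun p hp => (hS p hp).prime,
    fun h p hp => (dvd_prod_of_mem _ hp).trans h⟩ rfl rfl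

theorem sum_Icc_prod_ite_dvd_div_le {S : Finset ℕ} (hS : ∀ p ∈ S, p.Prime) (n : ℕ) :
    (∑ v ∈ Icc 1 n, ∏ p ∈ S, (if p ∣ v then (1 : ℝ) else 0)) / n ≤ ∏ p ∈ S, (p : ℝ)⁻¹ := by
  have hIcc : Icc 1 n = Ioc 0 n := Icc_add_one_left_eq_Ioc 0 n
  rw [sum_congr rfl fun v _ => prod_ite_dvd_eq_ite_prod_dvd hS v, sum_boole, hIcc,
    Nat.Ioc_filter_dvd_card_eq_div, prod_inv_distrib, ← Nat.cast_prod]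
  exact Nat.cast_div_div_self_le_inv n _

section
variable {Ω ι : Type*} {mΩ : MeasurableSpace Ω} {μ : Measure Ω}

theorem integral_eq_measureReal_of_eq_zero_or_eq_one {X : Ω → ℝ} (hX : Measurable X)
    (h01 : ∀ ω, X ω = 0 ∨ X ω = 1) : ∫ ω, X ω ∂μ = μ.real {ω | X ω = 1} := by
  have hX_eq : ∀ ω, X ω = (X ⁻¹' {1}).indicator 1 ω := fun ω => by
    rcases h01 ω with h | h <;> simp [h]
  rw [integral_congr_ae (ae_of_all _ hX_eq),
    integral_indicator_one (hX (measurableSet_singleton 1))]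
  rfl

theorem ProbabilityTheory.iIndepFun.integral_finset_prod {X : ι → Ω → ℝ}
    (hX : iIndepFun X μ) (mX : ∀ i, Measurable (X i)) (s : Finset ι) :
    ∫ ω, ∏ i ∈ s, X i ω ∂μ = ∏ i ∈ s, ∫ ω, X i ω ∂μ := by
  have hXs : iIndepFun (fun i : s => X i) μ := hX.precomp Subtype.val_injective
  calc ∫ ω, ∏ i ∈ s, X i ω ∂μ = ∫ ω, ∏ i : s, X i ω ∂μ :=
        integral_congr_ae (ae_of_all _ fun ω => (prod_coe_sort s fun i => X i ω).symm)
    _ = ∏ i ∈ s, ∫ ω, X i ω ∂μ := by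
      rw [hXs.integral_fun_prod_eq_prod_integral fun i => (mX i).aestronglyMeasurable,
        prod_coe_sort s fun i => ∫ ω, X i ω ∂μ]

theorem integrable_finset_prod_of_eq_zero_or_eq_one [IsFiniteMeasure μ] {X : ι → Ω → ℝ}
    (mX : ∀ i, Measurable (X i)) (h01 : ∀ i ω, X i ω = 0 ∨ X i ω = 1) (s : Finset ι) :
    Integrable (fun ω => ∏ i ∈ s, X i ω) μ := by
  refine Integrable.of_bound (s.measurable_prod fun i _ => mX i).aestronglyMeasurable 1
    (ae_of_all _ fun ω => ?_)
  rw [norm_prod]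
  exact prod_le_one (fun _ _ => norm_nonneg _) fun i _ => by rcases h01 i ω with h | h <;> simp [h]

end

theorem erdos_kac_exp_moment_le_general (n : ℕ)
    (θ : ℕ → ℝ) (hθ : ∀ p, 0 ≤ θ p)
    {Ω : Type*} [MeasureSpace Ω] [IsProbabilityMeasure (ℙ : Measure Ω)]
    (Y : ℕ → Ω → ℝ) (hmeas : ∀ p, Measurable (Y p))
    (hind : iIndepFun Y ℙ)
    (h01 : ∀ p ω, Y p ω = 0 ∨ Y p ω = 1)
    (hBer : ∀ p, Nat.Prime p → (ℙ {ω | Y p ω = 1}) = ENNReal.ofReal (1 / p)) :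
    (∑ v ∈ Finset.Icc 1 n,
        Real.exp (∑ p ∈ (Finset.Icc 1 n).filter Nat.Prime,
          θ p * (if p ∣ v then (1 : ℝ) else 0))) / n
      ≤ ∫ ω, Real.exp (∑ p ∈ (Finset.Icc 1 n).filter Nat.Prime, θ p * Y p ω) := by
  set P := (Icc 1 n).filter Nat.Prime
  set c : Finset ℕ → ℝ := fun S => ∏ p ∈ S, (exp (θ p) - 1)
  have hPprime : ∀ S ∈ P.powerset, ∀ p ∈ S, p.Prime := fun S hS p hp =>
    (mem_filter.mp (mem_powerset.mp hS hp)).2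
  have hdivisors : (∑ v ∈ Icc 1 n, exp (∑ p ∈ P, θ p * (if p ∣ v then (1 : ℝ) else 0))) / n
      = ∑ S ∈ P.powerset, c S * ((∑ v ∈ Icc 1 n, ∏ p ∈ S, (if p ∣ v then (1 : ℝ) else 0)) / n) := by
    rw [sum_congr rfl fun v _ => exp_sum_mul_eq_sum_powerset P θ
      (fun p => if p ∣ v then 1 else 0) fun p _ => (ite_eq_or_eq _ _ _).symm]
    rw [sum_comm, sum_div]
    simp_rw [← mul_sum, mul_div_assoc]
    rfl
  have hBernoulli : ∫ ω, exp (∑ p ∈ P, θ p * Y p ω)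
      = ∑ S ∈ P.powerset, c S * ∏ p ∈ S, (p : ℝ)⁻¹ := by
    rw [integral_congr_ae (ae_of_all _ fun ω =>
        exp_sum_mul_eq_sum_powerset P θ _ fun p _ => h01 p ω),
      integral_finsetSum _ fun S _ =>
        (integrable_finset_prod_of_eq_zero_or_eq_one hmeas h01 S).const_mul _]
    refine sum_congr rfl fun S hS => ?_
    rw [integral_const_mul, hind.integral_finset_prod hmeas]
    congr 1
    refine prod_congr rfl fun p hp => ?_
    rw [integral_eq_measureReal_of_eq_zero_or_eq_one (hmeas p) (h01 p), measureReal_def,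
      hBer p (hPprime S hS p hp), ENNReal.toReal_ofReal (by positivity), one_div]
  rw [hdivisors, hBernoulli]
  gcongr with S hS
  · exact prod_nonneg fun p _ => sub_nonneg.mpr (one_le_exp (hθ p))
  · exact sum_Icc_prod_ite_dvd_div_le (hPprime S hS) n

/-- For nonnegative weights `θ p`, the exponential moment of the weighted sum of
divisibility indicators of a uniform random integer on `{1,…,n}` is dominated by
that of independent Bernoulli(1/p) random variables. -/
theorem erdos_kac_exp_moment_le (n : ℕ) (hn : 0 < n)
    (θ : ℕ → ℝ) (hθ : ∀ p, 0 ≤ θ p)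
    {Ω : Type*} [MeasureSpace Ω] [IsProbabilityMeasure (ℙ : Measure Ω)]
    (Y : ℕ → Ω → ℝ) (hmeas : ∀ p, Measurable (Y p))
    (hind : iIndepFun Y ℙ)
    (h01 : ∀ p ω, Y p ω = 0 ∨ Y p ω = 1)
    (hBer : ∀ p, Nat.Prime p → (ℙ {ω | Y p ω = 1}) = ENNReal.ofReal (1 / p)) :
    (∑ v ∈ Finset.Icc 1 n,
        Real.exp (∑ p ∈ (Finset.Icc 1 n).filter Nat.Prime,
          θ p * (if p ∣ v then (1 : ℝ) else 0))) / n
      ≤ ∫ ω, Real.exp (∑ p ∈ (Finset.Icc 1 n).filter Nat.Prime, θ p * Y p ω) :=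
  erdos_kac_exp_moment_le_general n θ hθ Y hmeas hind h01 hBer
end

section
/- For λ > 0 and x ≥ 0, the supremum over θ ∈ ℝ of θx − (e^{λ(e^θ − 1)} − 1) equals x·log(W(x e^λ)/λ) + 1 − e^{W(x e^λ) − λ} when x > 0, where W is the Lambert W function satisfying W(z)e^{W(z)} = z for z > 0. -/
/-!
The function `g θ = exp (l * (exp θ - 1))` is convex, with `g' θ = l * exp θ * g θ`. At
`θ₀ = log (w / l)`, `w = W (x * exp l)`, the slope is `w * exp (w - l) = x`, so the tangent line
of `g` at `θ₀` has slope `x` and `θ₀` maximises `θ * x - (g θ - 1)`. The tangent-line inequality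
is obtained by chaining the tangent-line inequality of `exp` twice.
-/

open Real

theorem exp_mul_sub_add_one_le_exp (a b : ℝ) : exp b * (a - b + 1) ≤ exp a := by
  calc exp b * (a - b + 1) ≤ exp b * exp (a - b) :=
        mul_le_mul_of_nonneg_left (by linarith [add_one_le_exp (a - b)]) (exp_pos b).le
    _ = exp a := by rw [← exp_add, add_sub_cancel]

theorem exp_mul_exp_sub_one_tangent_le {l : ℝ} (hl : 0 ≤ l) (t θ : ℝ) :
    exp (l * (exp t - 1)) * (1 + l * exp t * (θ - t)) ≤ exp (l * (exp θ - 1)) := by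
  have h_inner : l * (exp t * (θ - t + 1)) ≤ l * exp θ :=
    mul_le_mul_of_nonneg_left (exp_mul_sub_add_one_le_exp θ t) hl
  calc exp (l * (exp t - 1)) * (1 + l * exp t * (θ - t))
      ≤ exp (l * (exp t - 1)) * (l * (exp θ - 1) - l * (exp t - 1) + 1) :=
        mul_le_mul_of_nonneg_left (by linarith) (exp_pos _).le
    _ ≤ exp (l * (exp θ - 1)) := exp_mul_sub_add_one_le_exp _ _

/-- With `ρ` Poisson(λ), the Legendre transform of `θ ↦ e^{λ(e^θ−1)} − 1` at `x > 0`
equals `x·log(W(x e^λ)/λ) + 1 − e^{W(x e^λ) − λ}`, where `W` is the principal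
Lambert W function on `(0,∞)`. -/
theorem legendre_poisson_compound_rate (W : ℝ → ℝ)
    (hW : ∀ z : ℝ, 0 < z → 0 < W z ∧ W z * Real.exp (W z) = z)
    (l x : ℝ) (hl : 0 < l) (hx : 0 < x) :
    IsGreatest
      (Set.range fun θ : ℝ => θ * x - (Real.exp (l * (Real.exp θ - 1)) - 1))
      (x * Real.log (W (x * Real.exp l) / l) + 1
        - Real.exp (W (x * Real.exp l) - l)) := by
  obtain ⟨hw_pos, hw_eq⟩ := hW (x * exp l) (by positivity)
  set w := W (x * exp l)
  set θ₀ := log (w / l)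
  have h_slope : l * exp θ₀ = w := by
    rw [exp_log (div_pos hw_pos hl)]; field_simp
  have h_exponent : l * (exp θ₀ - 1) = w - l := by rw [mul_sub, h_slope, mul_one]
  have hx_eq : x = w * exp (w - l) := by
    rw [exp_sub, ← mul_div_assoc, hw_eq, mul_div_cancel_right₀ _ (exp_pos l).ne']
  refine ⟨⟨θ₀, by simp only [h_exponent]; ring⟩, ?_⟩
  rintro _ ⟨θ, rfl⟩
  have h_tangent := exp_mul_exp_sub_one_tangent_le hl.le θ₀ θ
  rw [h_exponent, h_slope] at h_tangent
  dsimp only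
  rw [hx_eq]
  linarith
end

section
/- Let W denote the principal Lambert W function on (0,∞). For x > 0, the supremum over θ ∈ ℝ of θx − (e^{θ²/2} − 1) equals √(W(x²))·x + 1 − x/√(W(x²)), attained at θ = √(W(x²)). -/
/-!
The function `θ ↦ e^{θ²/2}` lies above each of its tangent lines, so `θ ↦ θx − (e^{θ²/2} − 1)` is
maximised where its derivative vanishes, i.e. at the `s` with `s e^{s²/2} = x`. Squaring, this is
`s² e^{s²} = x²`, so `s = √(W(x²))`; at that point `e^{s²/2} = x / s`, which gives the value.
-/

open Real

theorem exp_sq_half_add_mul_sub_le (s θ : ℝ) :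
    exp (s ^ 2 / 2) + s * exp (s ^ 2 / 2) * (θ - s) ≤ exp (θ ^ 2 / 2) :=
  calc exp (s ^ 2 / 2) + s * exp (s ^ 2 / 2) * (θ - s)
      ≤ exp (s ^ 2 / 2) * (1 + (θ ^ 2 - s ^ 2) / 2) := by
        nlinarith [exp_pos (s ^ 2 / 2), sq_nonneg (θ - s)]
    _ ≤ exp (s ^ 2 / 2) * exp ((θ ^ 2 - s ^ 2) / 2) := by
        gcongr
        linarith [add_one_le_exp ((θ ^ 2 - s ^ 2) / 2)]
    _ = exp (θ ^ 2 / 2) := by rw [← exp_add]; ring_nf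

theorem isGreatest_range_mul_sub_exp_sq_half {s x : ℝ} (hx : s * exp (s ^ 2 / 2) = x) :
    IsGreatest (Set.range fun θ : ℝ => θ * x - (exp (θ ^ 2 / 2) - 1))
      (s * x - (exp (s ^ 2 / 2) - 1)) := by
  refine ⟨⟨s, rfl⟩, ?_⟩
  rintro _ ⟨θ, rfl⟩
  have := exp_sq_half_add_mul_sub_le s θ
  rw [hx] at this
  dsimp only
  linarith

theorem mul_exp_sq_half_eq_of_sq_mul_exp_sq {s x : ℝ} (hs : 0 ≤ s) (hx : 0 ≤ x)
    (h : s ^ 2 * exp (s ^ 2) = x ^ 2) : s * exp (s ^ 2 / 2) = x := by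
  refine (pow_left_inj₀ (by positivity) hx two_ne_zero).1 ?_
  rw [mul_pow, ← exp_nat_mul, ← h]
  ring_nf

/-- With `ρ` standard Gaussian, the Legendre transform of `θ ↦ e^{θ²/2} − 1` at
`x > 0` equals `√(W(x²))·x + 1 − x/√(W(x²))`, attained at `θ = √(W(x²))`,
where `W` is the principal Lambert W function on `(0,∞)`. -/
theorem legendre_gaussian_rate (W : ℝ → ℝ)
    (hW : ∀ z : ℝ, 0 < z → 0 < W z ∧ W z * Real.exp (W z) = z)
    (x : ℝ) (hx : 0 < x) :
    IsGreatest
        (Set.range fun θ : ℝ => θ * x - (Real.exp (θ ^ 2 / 2) - 1))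
        (Real.sqrt (W (x ^ 2)) * x + 1 - x / Real.sqrt (W (x ^ 2))) ∧
      Real.sqrt (W (x ^ 2)) * x - (Real.exp (Real.sqrt (W (x ^ 2)) ^ 2 / 2) - 1)
        = Real.sqrt (W (x ^ 2)) * x + 1 - x / Real.sqrt (W (x ^ 2)) := by
  obtain ⟨hw, hwx⟩ := hW (x ^ 2) (by positivity)
  set s := √(W (x ^ 2))
  have hs : 0 < s := sqrt_pos.2 hw
  have hcrit : s * exp (s ^ 2 / 2) = x :=
    mul_exp_sq_half_eq_of_sq_mul_exp_sq hs.le hx.le (by rwa [sq_sqrt hw.le])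
  have hvalue : s * x - (exp (s ^ 2 / 2) - 1) = s * x + 1 - x / s := by
    rw [← hcrit, mul_div_cancel_left₀ _ hs.ne']
    ring
  exact ⟨hvalue ▸ isGreatest_range_mul_sub_exp_sq_half hcrit, hvalue⟩
end
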